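/- arXiv:2603.05370 — 5 statements merged into one kernel-verified Lean document; each statement's English description precedes it below -/
import Mathlib

section
/- Let I be a semi-graphoid on a finite set V, π a linear order on V, and G^π the permutation-induced DAG. Then G^π is subgraph-minimal among DAGs with topological order π satisfying the ordered Markov property: there is no proper subgraph H of G^π (same vertices, strictly fewer edges, each vertex's parent set in H contained in its parent set in G^π) such that for every v ∈ V, I({v}, Pre(v) \ Pa_H(v), Pa_H(v)) holds. -/
/-- Three pairwise disjoint finsets. -/
def PairwiseDisj {V : Type*} [DecidableEq V] (A B S : Finset V) : Prop :=
  Disjoint A B ∧ Disjoint A S ∧ Disjoint B S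

/-- A semi-graphoid: a ternary relation on pairwise disjoint finsets satisfying
symmetry, decomposition, weak union and contraction. -/
structure SemiGraphoid (V : Type*) [DecidableEq V] where
  I : Finset V → Finset V → Finset V → Prop
  symm : ∀ A B S, PairwiseDisj A B S → I A B S → I B A S
  decomposition : ∀ A B C S, PairwiseDisj A (B ∪ C) S → I A (B ∪ C) S → I A B S
  weakUnion : ∀ A B C S, PairwiseDisj A (B ∪ C) S → I A (B ∪ C) S → I A B (S ∪ C)
  contraction : ∀ A B C S, PairwiseDisj A B (S ∪ C) → PairwiseDisj A C S →
    I A B (S ∪ C) → I A C S → I A (B ∪ C) S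

/-- The set of vertices strictly preceding `v` in the linear order given by `π`. -/
def Pre {V : Type*} [Fintype V] (π : V → ℕ) (v : V) : Finset V :=
  Finset.univ.filter (fun u => π u < π v)

/-! Weak union lets every vertex `u` of a non-parent set be moved into the conditioning set on
its own: if `v` is Markov with respect to parents `P ⊆ Pre v` and `u ∈ Pre v \ P`, then
`I({v}, {u}, Pre v \ {u})`, i.e. `u → v` is not an edge of `G^π`. Hence every edge of `G^π`
survives in any Markov subgraph. -/

theorem SemiGraphoid.I_singleton_of_mem {V : Type*} [DecidableEq V] (SG : SemiGraphoid V)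
    {A B S : Finset V} {u : V} (hu : u ∈ B) (hd : PairwiseDisj A B S) (h : SG.I A B S) :
    SG.I A {u} (S ∪ B.erase u) := by
  have hB : {u} ∪ B.erase u = B := by rw [← Finset.insert_eq, Finset.insert_erase hu]
  rw [← hB] at hd h
  exact SG.weakUnion A {u} (B.erase u) S hd h

theorem notMem_Pre_self {V : Type*} [Fintype V] (π : V → ℕ) (v : V) : v ∉ Pre π v := by
  simp [Pre]

theorem pairwiseDisj_singleton_Pre_sdiff {V : Type*} [Fintype V] [DecidableEq V] (π : V → ℕ) (v : V)
    {P : Finset V} (hP : P ⊆ Pre π v) : PairwiseDisj {v} (Pre π v \ P) P := by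
  have hv := notMem_Pre_self π v
  refine ⟨?_, ?_, Finset.sdiff_disjoint⟩ <;> rw [Finset.disjoint_singleton_left]
  · exact fun h => hv (Finset.mem_sdiff.mp h).1
  · exact fun h => hv (hP h)

theorem SemiGraphoid.mem_of_orderedMarkov {V : Type*} [Fintype V] [DecidableEq V]
    (SG : SemiGraphoid V) (π : V → ℕ) {v u : V} {P : Finset V} (hP : P ⊆ Pre π v)
    (hMarkov : SG.I {v} (Pre π v \ P) P) (hu : u ∈ Pre π v)
    (hdep : ¬ SG.I {v} {u} (Pre π v \ {u})) : u ∈ P := by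
  by_contra huP
  have hsplit : P ∪ (Pre π v \ P).erase u = Pre π v \ {u} := by
    ext x
    by_cases hx : x = u
    · subst hx; simp [huP]
    · by_cases hxP : x ∈ P
      · simp [hx, hxP, hP hxP]
      · simp [hx, hxP]
  exact hdep (hsplit ▸ SG.I_singleton_of_mem (Finset.mem_sdiff.mpr ⟨hu, huP⟩)
    (pairwiseDisj_singleton_Pre_sdiff π v hP) hMarkov)

theorem stmt5_general {V : Type*} [Fintype V] [DecidableEq V] (SG : SemiGraphoid V)
    (π : V → ℕ)
    (Pa : V → Finset V)
    (hPa : ∀ v u, u ∈ Pa v ↔ π u < π v ∧ ¬ SG.I {v} {u} (Pre π v \ {u})) :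
    ¬ ∃ PaH : V → Finset V, (∀ v, PaH v ⊆ Pa v) ∧ (∃ v, PaH v ⊂ Pa v) ∧
      (∀ v, SG.I {v} (Pre π v \ PaH v) (PaH v)) := by
  rintro ⟨PaH, hsub, ⟨v, hv⟩, hMarkov⟩
  have hPaPre : Pa v ⊆ Pre π v := fun x hx => by
    simpa [Pre] using ((hPa v x).mp hx).1
  obtain ⟨u, huPa, huH⟩ := Finset.exists_of_ssubset hv
  exact huH (SG.mem_of_orderedMarkov π ((hsub v).trans hPaPre) (hMarkov v) (hPaPre huPa)
    ((hPa v u).mp huPa).2)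

/-- The permutation-induced DAG `G^π` is subgraph minimal among DAGs with
topological order `π` satisfying the ordered Markov property: no proper subgraph
(described by its parent sets) satisfies the ordered Markov property. -/
theorem stmt5 {V : Type*} [Fintype V] [DecidableEq V] (SG : SemiGraphoid V)
    (π : V → ℕ) (hinj : Function.Injective π)
    (Pa : V → Finset V)
    (hPa : ∀ v u, u ∈ Pa v ↔ π u < π v ∧ ¬ SG.I {v} {u} (Pre π v \ {u})) :
    ¬ ∃ PaH : V → Finset V, (∀ v, PaH v ⊆ Pa v) ∧ (∃ v, PaH v ⊂ Pa v) ∧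
      (∀ v, SG.I {v} (Pre π v \ PaH v) (PaH v)) :=
  stmt5_general SG π Pa hPa
end

section
/- Let I be a semi-graphoid on a finite set V, and let G be a DAG on V with topological order π such that I({v}, Pre(v) \ Pa(v), Pa(v)) holds for every v. Suppose H is a subgraph of G (Pa_H(v) ⊆ Pa_G(v) for all v) that also satisfies the ordered Markov property relative to π. Then for every v and every u ∈ Pa_G(v) \ Pa_H(v), the statement I({v}, {u}, Pa_G(v) \ {u}) holds. -/
/-! Decomposition cuts the Markov statement of `H` at `v` down to `I({v}, Pa_G(v) \ Pa_H(v), Pa_H(v))`;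
weak union then moves all of `Pa_G(v) \ Pa_H(v)` except `u` into the conditioning set, which
becomes `Pa_G(v) \ {u}`. -/

section

variable {V : Type*} [DecidableEq V] {A B B' S : Finset V}

theorem PairwiseDisj.mono_mid (hB : B' ⊆ B) (hd : PairwiseDisj A B S) :
    PairwiseDisj A B' S :=
  ⟨hd.1.mono_right hB, hd.2.1, hd.2.2.mono_left hB⟩

theorem SemiGraphoid.decomposition_of_subset (SG : SemiGraphoid V) (hB : B' ⊆ B)
    (hd : PairwiseDisj A B S) (h : SG.I A B S) : SG.I A B' S := by
  rw [← Finset.union_sdiff_of_subset hB] at hd h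
  exact SG.decomposition _ _ _ _ hd h

theorem SemiGraphoid.weakUnion_of_subset (SG : SemiGraphoid V) (hB : B' ⊆ B)
    (hd : PairwiseDisj A B S) (h : SG.I A B S) : SG.I A B' (S ∪ (B \ B')) := by
  rw [← Finset.union_sdiff_of_subset hB] at hd h
  exact SG.weakUnion _ _ _ _ hd h

end

theorem stmt6_general {V : Type*} [Fintype V] [DecidableEq V] (SG : SemiGraphoid V)
    (π : V → ℕ)
    (PaG PaH : V → Finset V)
    (hGtopo : ∀ v, PaG v ⊆ Pre π v)
    (hsub : ∀ v, PaH v ⊆ PaG v)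
    (hMarkovH : ∀ v, SG.I {v} (Pre π v \ PaH v) (PaH v)) :
    ∀ v u, u ∈ PaG v \ PaH v → SG.I {v} {u} (PaG v \ {u}) := by
  intro v u hu
  have hv : v ∉ Pre π v := by simp [Pre]
  have hdisj : PairwiseDisj {v} (Pre π v \ PaH v) (PaH v) :=
    ⟨by simp [hv], by simpa using fun h => hv (hGtopo v (hsub v h)), Finset.sdiff_disjoint⟩
  have hPa : PaG v \ PaH v ⊆ Pre π v \ PaH v := Finset.sdiff_subset_sdiff (hGtopo v) le_rfl
  have hIndep := SG.decomposition_of_subset hPa hdisj (hMarkovH v)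
  have hu' := SG.weakUnion_of_subset (Finset.singleton_subset_iff.2 hu) (hdisj.mono_mid hPa) hIndep
  convert hu' using 1
  ext x
  have hHG := @hsub v x
  simp only [Finset.mem_sdiff, Finset.mem_union, Finset.mem_singleton] at hu ⊢
  grind

/-- If a DAG `G` with topological order `π` satisfies the ordered Markov
property, and a subgraph `H` of `G` also satisfies it, then for every `v` and every
`u ∈ Pa_G(v) \ Pa_H(v)` we have `I({v}, {u}, Pa_G(v) \ {u})`. -/
theorem stmt6 {V : Type*} [Fintype V] [DecidableEq V] (SG : SemiGraphoid V)
    (π : V → ℕ) (hinj : Function.Injective π)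
    (PaG PaH : V → Finset V)
    (hGtopo : ∀ v, PaG v ⊆ Pre π v)
    (hsub : ∀ v, PaH v ⊆ PaG v)
    (hMarkovG : ∀ v, SG.I {v} (Pre π v \ PaG v) (PaG v))
    (hMarkovH : ∀ v, SG.I {v} (Pre π v \ PaH v) (PaH v)) :
    ∀ v u, u ∈ PaG v \ PaH v → SG.I {v} {u} (PaG v \ {u}) :=
  stmt6_general SG π PaG PaH hGtopo hsub hMarkovH
end

section
/- Let G be a directed graph on vertex set [m] × ℤ that is time-shift invariant (edges closed under simultaneous time translation) and whose every edge (i,s) → (j,t) satisfies s ≤ t. Then G is acyclic if and only if its contemporaneous subgraph (the induced subgraph on vertices with a fixed time index, keeping only zero-lag edges) is acyclic. -/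
/-- A time-shift-invariant directed graph on `[m] × ℤ` whose edges respect
time is acyclic iff its contemporaneous subgraph is acyclic. -/
theorem stmt8 (m : ℕ) (E : (Fin m × ℤ) → (Fin m × ℤ) → Prop)
    (hshift : ∀ (i j : Fin m) (s t k : ℤ), E (i, s) (j, t) ↔ E (i, s + k) (j, t + k))
    (htime : ∀ (i j : Fin m) (s t : ℤ), E (i, s) (j, t) → s ≤ t) :
    (∀ v, ¬ Relation.TransGen E v v) ↔
      (∀ i : Fin m, ¬ Relation.TransGen (fun i j : Fin m => E (i, 0) (j, 0)) i i) := by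
  have htime' : ∀ a b : Fin m × ℤ, E a b → a.2 ≤ b.2 := by
    rintro ⟨i, s⟩ ⟨j, t⟩ h; exact htime i j s t h
  have hle : ∀ a b : Fin m × ℤ, Relation.TransGen E a b → a.2 ≤ b.2 := by
    intro a b h
    induction h with
    | single h => exact htime' _ _ h
    | tail _ h ih => exact ih.trans (htime' _ _ h)
  have hzero : ∀ a b : Fin m × ℤ, E a b → a.2 = b.2 → E (a.1, 0) (b.1, 0) := by
    rintro ⟨i, s⟩ ⟨j, t⟩ h heq
    have := (hshift i j s t (-s)).mp h
    simp only at heq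
    simpa [heq] using this
  constructor
  · intro hac i hcyc
    exact hac (i, (0 : ℤ))
      (Relation.TransGen.lift (fun j : Fin m => ((j, 0) : Fin m × ℤ)) (fun a b h => h) _ _ hcyc)
  · intro hac v hcyc
    have key : ∀ a b : Fin m × ℤ, Relation.TransGen E a b → a.2 = b.2 →
        Relation.TransGen (fun i j : Fin m => E (i, 0) (j, 0)) a.1 b.1 := by
      intro a b h
      induction h using Relation.TransGen.head_induction_on with
      | single h => intro heq; exact Relation.TransGen.single (hzero _ _ h heq)
      | head h h' ih =>
        rename_i a c
        intro heq
        have h1 : a.2 ≤ c.2 := htime' _ _ h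
        have h2 : c.2 ≤ b.2 := hle _ _ h'
        have hc : c.2 = b.2 := le_antisymm h2 (heq ▸ h1)
        exact Relation.TransGen.head (hzero _ _ h (heq.trans hc.symm)) (ih hc)
    exact hac v.1 (key v v hcyc rfl)
end

section
/- Let G be a DAG on finite V with topological order π and let I be a compositional graphoid satisfying the ordered Markov property relative to π, i.e., I({v}, Pre(v) \ Pa(v), Pa(v)) for all v. Then I satisfies the local Markov property with respect to G: I({v}, nd(v) \ Pa(v), Pa(v)) for all v. -/
/-- For compositional graphoids (semi-graphoids additionally satisfying
intersection and composition), the ordered Markov property relative to a topological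
order `π` of a DAG `G` implies the local Markov property w.r.t. `G`. -/
theorem stmt14 {V : Type*} [Fintype V] [DecidableEq V] (SG : SemiGraphoid V)
    (hempty : ∀ A S : Finset V, SG.I A ∅ S)
    (hinter : ∀ A B C S : Finset V, PairwiseDisj A (B ∪ C) S →
      SG.I A B (S ∪ C) → SG.I A C (S ∪ B) → SG.I A (B ∪ C) S)
    (hcomp : ∀ A B C S : Finset V, PairwiseDisj A (B ∪ C) S →
      SG.I A B S → SG.I A C S → SG.I A (B ∪ C) S)
    (E : V → V → Prop)
    (π : V → ℕ) (hinj : Function.Injective π)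
    (htopo : ∀ u v, E u v → π u < π v)
    (Pa nd : V → Finset V)
    (hPa : ∀ v u, u ∈ Pa v ↔ E u v)
    (hnd : ∀ v u, u ∈ nd v ↔ u ≠ v ∧ ¬ Relation.TransGen E v u)
    (hOrdered : ∀ v, SG.I {v} (Pre π v \ Pa v) (Pa v)) :
    ∀ v, SG.I {v} (nd v \ Pa v) (Pa v) := by

  have htrans : ∀ u w, Relation.TransGen E u w → π u < π w := by
    intro u w h
    induction h with
    | single h => exact htopo _ _ h
    | tail _ h ih => exact lt_trans ih (htopo _ _ h)
  intro v
  have hvnd : v ∉ nd v := by simp [hnd]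
  have hPreSub : Pre π v ⊆ nd v := by
    intro u hu
    simp only [Pre, Finset.mem_filter, Finset.mem_univ, true_and] at hu
    rw [hnd]
    exact ⟨fun h => by simp [h] at hu, fun h => absurd (htrans _ _ h) (by omega)⟩
  have hPaPre : Pa v ⊆ Pre π v := by
    intro u hu
    simp only [Pre, Finset.mem_filter, Finset.mem_univ, true_and]
    exact htopo _ _ ((hPa v u).mp hu)
  set F : ℕ → Finset V := fun m => (nd v).filter (fun u => π u < m) with hF
  have hmemF : ∀ m u, u ∈ F m ↔ u ∈ nd v ∧ π u < m := by
    intro m u; simp [hF]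
  have key : ∀ m, π v ≤ m → SG.I {v} (F m \ Pa v) (Pa v) := by
    intro m hm
    induction m, hm using Nat.le_induction with
    | base =>
      have hEq : F (π v) = Pre π v := by
        ext u
        rw [hmemF]
        simp only [Pre, Finset.mem_filter, Finset.mem_univ, true_and]
        constructor
        · rintro ⟨_, h⟩; exact h
        · intro h
          exact ⟨hPreSub (by simp [Pre, h]), h⟩
      rw [hEq]; exact hOrdered v
    | succ m hm ih =>
      by_cases hw : ∃ w ∈ nd v, π w = m
      · obtain ⟨w, hwnd, hwm⟩ := hw
        have hvw : v ≠ w := fun h => hvnd (h ▸ hwnd)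
        have hπw : π v < π w := lt_of_le_of_ne (hwm ▸ hm) (fun h => hvw (hinj h))
        have hwFm : w ∉ F m := by rw [hmemF]; omega
        have hvFm : v ∉ F m := by rw [hmemF]; tauto
        have hwPav : w ∉ Pa v := fun h => absurd (htopo _ _ ((hPa v w).mp h)) (by omega)
        have hvPaw : v ∉ Pa w := by
          intro h
          rw [hnd] at hwnd
          exact hwnd.2 (Relation.TransGen.single ((hPa w v).mp h))
        have hwPaw : w ∉ Pa w := fun h => absurd (htopo _ _ ((hPa w w).mp h)) (by omega)
        have hvPav : v ∉ Pa v := fun h => absurd (htopo _ _ ((hPa v v).mp h)) (by omega)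
        have hPawFm : Pa w ⊆ F m := by
          intro u hu
          have hE : E u w := (hPa w u).mp hu
          rw [hmemF, hnd]
          refine ⟨⟨?_, ?_⟩, ?_⟩
          · rintro rfl
            rw [hnd] at hwnd
            exact hwnd.2 (Relation.TransGen.single hE)
          · intro h
            rw [hnd] at hwnd
            exact hwnd.2 (h.tail hE)
          · have := htopo _ _ hE; omega
        have hPavFm : Pa v ⊆ F m := by
          intro u hu
          rw [hmemF]
          refine ⟨hPreSub (hPaPre hu), ?_⟩
          have := htopo _ _ ((hPa v u).mp hu)
          omega
        have hFmPre : F m ⊆ Pre π w := by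
          intro u hu
          rw [hmemF] at hu
          simp only [Pre, Finset.mem_filter, Finset.mem_univ, true_and]
          omega
        -- step 1: decomposition
        set S1 : Finset V := {v} ∪ (F m \ Pa w) with hS1
        have hS1sub : S1 ⊆ Pre π w \ Pa w := by
          intro u hu
          rw [hS1, Finset.mem_union, Finset.mem_singleton] at hu
          rw [Finset.mem_sdiff]
          rcases hu with rfl | hu
          · refine ⟨?_, hvPaw⟩
            simp only [Pre, Finset.mem_filter, Finset.mem_univ, true_and]
            omega
          · rw [Finset.mem_sdiff] at hu
            exact ⟨hFmPre hu.1, hu.2⟩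
        have hS1eq : S1 ∪ (Pre π w \ Pa w) \ S1 = Pre π w \ Pa w :=
          Finset.union_sdiff_of_subset hS1sub
        have hwPre : w ∉ Pre π w := by
          simp [Pre]
        have hdisj1 : PairwiseDisj {w} (S1 ∪ (Pre π w \ Pa w) \ S1) (Pa w) := by
          rw [hS1eq]
          refine ⟨?_, ?_, Finset.sdiff_disjoint⟩
          · rw [Finset.disjoint_singleton_left, Finset.mem_sdiff]
            tauto
          · rw [Finset.disjoint_singleton_left]; exact hwPaw
        have step1 : SG.I {w} S1 (Pa w) := by
          apply SG.decomposition _ _ _ _ hdisj1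
          rw [hS1eq]
          exact hOrdered w
        -- step 2: weak union
        have hdisj2 : PairwiseDisj {w} ({v} ∪ (F m \ Pa w)) (Pa w) := by
          refine ⟨?_, ?_, ?_⟩
          · rw [Finset.disjoint_singleton_left, Finset.mem_union, Finset.mem_singleton,
              Finset.mem_sdiff]
            push_neg
            exact ⟨hvw.symm, fun h => absurd h hwFm⟩
          · rw [Finset.disjoint_singleton_left]; exact hwPaw
          · rw [Finset.disjoint_union_left]
            refine ⟨?_, Finset.sdiff_disjoint⟩
            rw [Finset.disjoint_singleton_left]; exact hvPaw
        have step2 : SG.I {w} {v} (Pa w ∪ (F m \ Pa w)) :=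
          SG.weakUnion _ _ _ _ hdisj2 (by rw [← hS1]; exact step1)
        have hPawUnion : Pa w ∪ (F m \ Pa w) = F m := Finset.union_sdiff_of_subset hPawFm
        rw [hPawUnion] at step2
        -- step 3: symmetry
        have hdisj3 : PairwiseDisj {w} {v} (F m) := by
          refine ⟨?_, ?_, ?_⟩
          · rw [Finset.disjoint_singleton_left, Finset.mem_singleton]; exact hvw.symm
          · rw [Finset.disjoint_singleton_left]; exact hwFm
          · rw [Finset.disjoint_singleton_left]; exact hvFm
        have step3 : SG.I {v} {w} (F m) := SG.symm _ _ _ hdisj3 step2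
        -- step 4: contraction
        have hPavUnion : Pa v ∪ (F m \ Pa v) = F m := Finset.union_sdiff_of_subset hPavFm
        have hdisj4a : PairwiseDisj {v} {w} (Pa v ∪ (F m \ Pa v)) := by
          rw [hPavUnion]
          refine ⟨?_, ?_, ?_⟩
          · rw [Finset.disjoint_singleton_left, Finset.mem_singleton]; exact hvw
          · rw [Finset.disjoint_singleton_left]; exact hvFm
          · rw [Finset.disjoint_singleton_left]; exact hwFm
        have hdisj4b : PairwiseDisj {v} (F m \ Pa v) (Pa v) := by
          refine ⟨?_, ?_, Finset.sdiff_disjoint⟩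
          · rw [Finset.disjoint_singleton_left, Finset.mem_sdiff]; tauto
          · rw [Finset.disjoint_singleton_left]; exact hvPav
        have step4 : SG.I {v} ({w} ∪ (F m \ Pa v)) (Pa v) :=
          SG.contraction _ _ _ _ hdisj4a hdisj4b (by rw [hPavUnion]; exact step3) ih
        have hEq : F (m + 1) \ Pa v = {w} ∪ (F m \ Pa v) := by
          ext u
          rw [Finset.mem_sdiff, hmemF, Finset.mem_union, Finset.mem_singleton,
            Finset.mem_sdiff, hmemF]
          constructor
          · rintro ⟨⟨hund, hulm⟩, huPa⟩
            rcases Nat.lt_succ_iff_lt_or_eq.mp hulm with h | h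
            · exact Or.inr ⟨⟨hund, h⟩, huPa⟩
            · exact Or.inl (hinj (h.trans hwm.symm))
          · rintro (rfl | ⟨⟨hund, hulm⟩, huPa⟩)
            · exact ⟨⟨hwnd, by omega⟩, hwPav⟩
            · exact ⟨⟨hund, by omega⟩, huPa⟩
        rw [hEq]
        exact step4
      · have hEq : F (m + 1) = F m := by
          ext u
          rw [hmemF, hmemF]
          constructor
          · rintro ⟨hund, h⟩
            rcases Nat.lt_succ_iff_lt_or_eq.mp h with h | h
            · exact ⟨hund, h⟩
            · exact absurd ⟨u, hund, h⟩ hw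
          · rintro ⟨hund, h⟩; exact ⟨hund, by omega⟩
        rw [hEq]
        exact ih
  have hfin : nd v = F (Finset.univ.sup π + 1) := by
    ext u
    rw [hmemF]
    simp only [iff_self_and]
    intro _
    have := Finset.le_sup (f := π) (Finset.mem_univ u)
    omega
  rw [hfin]
  exact key _ (by have := Finset.le_sup (f := π) (Finset.mem_univ v); omega)
end

section
/- Let I be a semi-graphoid on finite V = [m] × {−τ_max,…,0} and π an admissible permutation with induced stationary window graph G^π. Then G^π is window subgraph minimal: no proper stationary subgraph H of G^π satisfies the window Markov property (i.e., satisfies I({v}, nd(v)_H \ Pa(v)_H, Pa(v)_H) for every contemporaneous vertex v = (i, 0)). -/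
/-- The window vertex set `[m] × {-τmax, …, 0}` as a finset. -/
noncomputable def Window (m τmax : ℕ) : Finset (Fin m × ℤ) :=
  Finset.univ ×ˢ Finset.Icc (-(τmax : ℤ)) 0

/-- The set of window vertices strictly preceding `v` in the order given by `π`. -/
noncomputable def PreW (m τmax : ℕ) (π : (Fin m × ℤ) → ℕ) (v : Fin m × ℤ) : Finset (Fin m × ℤ) :=
  (Window m τmax).filter (fun u => π u < π v)

/-- The permutation-induced stationary window graph `G^π` is window
subgraph minimal: no proper stationary subgraph `H` of `G^π` satisfies the window
Markov property. -/
theorem stmt18 (m τmax : ℕ) (SG : SemiGraphoid (Fin m × ℤ))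
    (hempty : ∀ A S : Finset (Fin m × ℤ), SG.I A ∅ S)
    (π : (Fin m × ℤ) → ℕ)
    (hinj : ∀ u v, u ∈ Window m τmax → v ∈ Window m τmax → π u = π v → u = v)
    (hadm : ∀ u v, u ∈ Window m τmax → v ∈ Window m τmax → u.2 < v.2 → π u < π v)
    (E : (Fin m × ℤ) → (Fin m × ℤ) → Prop)
    (hE0 : ∀ (i : Fin m) (u : Fin m × ℤ),
      E u (i, 0) ↔ u ∈ PreW m τmax π (i, 0) ∧
        ¬ SG.I {(i, 0)} {u} (PreW m τmax π (i, 0) \ {u}))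
    (hEneg : ∀ (j i : Fin m) (s t' : ℤ), t' < 0 →
      (E (j, s) (i, t') ↔ s ≤ t' ∧ -(τmax : ℤ) ≤ s ∧ E (j, s - t') (i, 0)))
    (hEdom : ∀ u v, E u v → u ∈ Window m τmax ∧ v ∈ Window m τmax) :
    ∀ EH : (Fin m × ℤ) → (Fin m × ℤ) → Prop,
      (∀ u v, EH u v → E u v) →
      (∀ (j i : Fin m) (s t' : ℤ), t' < 0 →
        (EH (j, s) (i, t') ↔ s ≤ t' ∧ -(τmax : ℤ) ≤ s ∧ EH (j, s - t') (i, 0))) →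
      (∃ u v, E u v ∧ ¬ EH u v) →
      ∀ PaH ndH : (Fin m × ℤ) → Finset (Fin m × ℤ),
        (∀ v u, u ∈ PaH v ↔ EH u v) →
        (∀ v u, u ∈ ndH v ↔ u ∈ Window m τmax ∧ u ≠ v ∧ ¬ Relation.TransGen EH v u) →
        ¬ (∀ i : Fin m, SG.I {(i, 0)} (ndH (i, 0) \ PaH (i, 0)) (PaH (i, 0))) := by
  intro EH hsub hstat hex PaH ndH hPa hnd hMarkov
  obtain ⟨u0, v0, hE0', hnEH0⟩ := hex
  have hv0W := (hEdom _ _ hE0').2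
  have hv0le : v0.2 ≤ 0 := by
    simp only [Window, Finset.mem_product, Finset.mem_Icc] at hv0W
    exact hv0W.2.2
  -- Reduce to a missing edge into a contemporaneous (time-0) vertex.
  obtain ⟨u, i, hEu, hnEHu⟩ : ∃ (u : Fin m × ℤ) (i : Fin m), E u (i, 0) ∧ ¬ EH u (i, 0) := by
    rcases lt_or_eq_of_le hv0le with h | h
    · obtain ⟨j, s⟩ := u0; obtain ⟨iv, t'⟩ := v0
      have h1 := (hEneg j iv s t' h).1 hE0'
      refine ⟨(j, s - t'), iv, h1.2.2, fun hEH => ?_⟩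
      exact hnEH0 ((hstat j iv s t' h).2 ⟨h1.1, h1.2.1, hEH⟩)
    · have hv : ((v0.1, (0:ℤ)) : Fin m × ℤ) = v0 := by rw [← h]
      exact ⟨u0, v0.1, by rwa [hv], by rwa [hv]⟩
  -- membership in PreW
  have hPre : ∀ w v : Fin m × ℤ, w ∈ PreW m τmax π v ↔ w ∈ Window m τmax ∧ π w < π v := by
    intro w v; simp [PreW]
  -- one step along E from a time-0 vertex
  have hstep : ∀ x y : Fin m × ℤ, x.2 = 0 → E x y → y.2 = 0 ∧ π x < π y := by
    intro x y hx hE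
    have hyW := (hEdom _ _ hE).2
    have hy2 : y.2 = 0 := by
      by_contra hne
      have hylt : y.2 < 0 := by
        simp only [Window, Finset.mem_product, Finset.mem_Icc] at hyW
        exact lt_of_le_of_ne hyW.2.2 hne
      have h2 := (hEneg x.1 y.1 x.2 y.2 hylt).1 (by simpa using hE)
      omega
    have hy' : y = (y.1, (0:ℤ)) := by rw [← hy2]
    rw [hy'] at hE
    have h3 := ((hE0 y.1 x).1 hE).1
    rw [hPre] at h3
    exact ⟨hy2, by rw [hy']; exact h3.2⟩
  -- descendants of (i,0) in G (hence in H) have larger π-value and time 0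
  have hdesc : ∀ w, Relation.TransGen E (i, 0) w → w.2 = 0 ∧ π (i, 0) < π w := by
    intro w hw
    induction hw with
    | single h => exact hstep _ _ rfl h
    | tail _ h ih =>
        have h2 := hstep _ _ ih.1 h
        exact ⟨h2.1, ih.2.trans h2.2⟩
  have hdescH : ∀ w, Relation.TransGen EH (i, 0) w → π (i, 0) < π w := by
    intro w hw
    exact (hdesc w (Relation.TransGen.mono hsub _ _ hw)).2
  -- vertices preceding (i,0) are non-descendants in H
  have hndPre : ∀ w, w ∈ PreW m τmax π (i, 0) → w ∈ ndH (i, 0) := by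
    intro w hw
    rw [hPre] at hw
    rw [hnd]
    refine ⟨hw.1, fun he => by simp [he] at hw, fun hT => ?_⟩
    exact absurd (hdescH w hT) (by omega)
  have hu_pre : u ∈ PreW m τmax π (i, 0) := ((hE0 i u).1 hEu).1
  have hu_nI : ¬ SG.I {(i, 0)} {u} (PreW m τmax π (i, 0) \ {u}) := ((hE0 i u).1 hEu).2
  have hu_notPa : u ∉ PaH (i, 0) := fun h => hnEHu ((hPa _ _).1 h)
  have hu_nd : u ∈ ndH (i, 0) := hndPre u hu_pre
  have hvnotPre : (i, (0:ℤ)) ∉ PreW m τmax π (i, 0) := by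
    rw [hPre]; simp
  have hPaSub : PaH (i, 0) ⊆ PreW m τmax π (i, 0) := by
    intro w hw
    exact ((hE0 i w).1 (hsub _ _ ((hPa _ _).1 hw))).1
  have hvnotPa : (i, (0:ℤ)) ∉ PaH (i, 0) := fun h => hvnotPre (hPaSub h)
  have hvnotnd : (i, (0:ℤ)) ∉ ndH (i, 0) := by
    rw [hnd]; simp
  -- the splitting sets
  set ND := ndH (i, 0) \ PaH (i, 0) with hND
  set C := PreW m τmax π (i, 0) \ ({u} ∪ PaH (i, 0)) with hC
  set B := ND \ C with hB
  have hCsub : C ⊆ ND := by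
    intro w hw
    rw [hC, Finset.mem_sdiff, Finset.mem_union, Finset.mem_singleton] at hw
    push_neg at hw
    rw [hND, Finset.mem_sdiff]
    exact ⟨hndPre w hw.1, hw.2.2⟩
  have hBC : B ∪ C = ND := Finset.sdiff_union_of_subset hCsub
  have hub : u ∈ B := by
    rw [hB, Finset.mem_sdiff]
    constructor
    · rw [hND, Finset.mem_sdiff]; exact ⟨hu_nd, hu_notPa⟩
    · rw [hC, Finset.mem_sdiff]; simp
  have hS : PaH (i, 0) ∪ C = PreW m τmax π (i, 0) \ {u} := by
    ext w
    simp only [hC, Finset.mem_union, Finset.mem_sdiff, Finset.mem_singleton]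
    constructor
    · rintro (h | ⟨h1, h2⟩)
      · exact ⟨hPaSub h, fun he => hu_notPa (he ▸ h)⟩
      · push_neg at h2
        exact ⟨h1, h2.1⟩
    · rintro ⟨h1, h2⟩
      by_cases hp : w ∈ PaH (i, 0)
      · exact Or.inl hp
      · exact Or.inr ⟨h1, by simp [h2, hp]⟩
  -- disjointness for weak union
  have hvND : ((i, (0:ℤ))) ∉ ND := by
    rw [hND, Finset.mem_sdiff]; tauto
  have PD1 : PairwiseDisj {((i, (0:ℤ)))} ND (PaH (i, 0)) := by
    refine ⟨?_, ?_, ?_⟩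
    · rw [Finset.disjoint_singleton_left]; exact hvND
    · rw [Finset.disjoint_singleton_left]; exact hvnotPa
    · rw [hND]; exact Finset.sdiff_disjoint
  have hWU := SG.weakUnion {((i, (0:ℤ)))} B C (PaH (i, 0))
    (by rwa [hBC]) (by rw [hBC]; exact hMarkov i)
  rw [hS] at hWU
  -- disjointness for decomposition
  have hBsub : B ⊆ ND := by rw [hB]; exact Finset.sdiff_subset
  have PD2 : PairwiseDisj {((i, (0:ℤ)))} ({u} ∪ (B \ {u})) (PreW m τmax π (i, 0) \ {u}) := by
    have hBeq : ({u} : Finset (Fin m × ℤ)) ∪ (B \ {u}) = B := by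
      ext w
      by_cases h : w = u <;> simp [h, hub]
    rw [hBeq]
    refine ⟨?_, ?_, ?_⟩
    · rw [Finset.disjoint_singleton_left]
      exact fun h => hvND (hBsub h)
    · rw [Finset.disjoint_singleton_left, Finset.mem_sdiff]
      exact fun h => hvnotPre h.1
    · rw [Finset.disjoint_left]
      intro w hw hw2
      rw [hB, Finset.mem_sdiff] at hw
      rw [Finset.mem_sdiff, Finset.mem_singleton] at hw2
      apply hw.2
      rw [hC, Finset.mem_sdiff, Finset.mem_union, Finset.mem_singleton]
      have hwnPa : w ∉ PaH (i, 0) := by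
        have := hw.1; rw [hND, Finset.mem_sdiff] at this; exact this.2
      exact ⟨hw2.1, by tauto⟩
  have hfinal := SG.decomposition {((i, (0:ℤ)))} {u} (B \ {u})
    (PreW m τmax π (i, 0) \ {u}) PD2
    (by
      have hBeq : ({u} : Finset (Fin m × ℤ)) ∪ (B \ {u}) = B := by
        ext w
        by_cases h : w = u <;> simp [h, hub]
      rw [hBeq]; exact hWU)
  exact hu_nI hfinal
end
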